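/- Let ρ, θ, α, φ, λ be real numbers, let A be the 3×3 real matrix with rows (ρcosθ, −ρsinθ, 0), (ρsinθ, ρcosθ, 0), (0, 0, 1), let c = (1, 1, 1)ᵀ, and let x = λ·(α cosφ, α sinφ, 1)ᵀ ∈ ℝ³. Then for every integer k ≥ 0, cᵀ A^k x = λ·( α ρ^k (cos(φ + kθ) + sin(φ + kθ)) + 1 ). Consequently, if λ ≥ 0, 0 ≤ ρ ≤ 1, and α = 1/2, then cᵀ A^k x ≥ 0 for every k ≥ 0. -/

import Mathlib

open Matrix

/-- For the rotation–scaling realization matrix `A` associated with the pole pair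
`ρe^{±iθ}` together with the dominant pole at `1`, `c = (1,1,1)ᵀ` and
`x = l·(α cos φ, α sin φ, 1)ᵀ`, one has
`cᵀA^k x = l(αρ^k(cos(φ + kθ) + sin(φ + kθ)) + 1)` for every `k ≥ 0`; consequently,
if `l ≥ 0`, `0 ≤ ρ ≤ 1` and `α = 1/2`, then `cᵀA^k x ≥ 0` for every `k ≥ 0`. -/
theorem jordan_cone_observability
    (ρ θ α φ l : ℝ)
    (A : Matrix (Fin 3) (Fin 3) ℝ)
    (hA : A = !![ρ * Real.cos θ, -(ρ * Real.sin θ), 0;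
                 ρ * Real.sin θ, ρ * Real.cos θ, 0;
                 0, 0, 1])
    (c x : Fin 3 → ℝ)
    (hc : c = ![1, 1, 1])
    (hx : x = ![l * (α * Real.cos φ), l * (α * Real.sin φ), l]) :
    (∀ k : ℕ, c ⬝ᵥ (A ^ k).mulVec x
        = l * (α * ρ ^ k * (Real.cos (φ + k * θ) + Real.sin (φ + k * θ)) + 1)) ∧
    (0 ≤ l → 0 ≤ ρ → ρ ≤ 1 → α = 1 / 2 →
      ∀ k : ℕ, 0 ≤ c ⬝ᵥ (A ^ k).mulVec x) := by
  have key : ∀ k : ℕ, (A ^ k).mulVec x =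
      ![l * α * ρ ^ k * Real.cos (φ + k * θ),
        l * α * ρ ^ k * Real.sin (φ + k * θ), l] := by
    intro k
    induction k with
    | zero =>
      simp [hx]
      constructor <;> ring
    | succ k ih =>
      rw [pow_succ', ← Matrix.mulVec_mulVec, ih, hA]
      funext i
      fin_cases i <;>
        simp [Matrix.mulVec, dotProduct, Fin.sum_univ_three, Real.cos_add,
          Real.sin_add, pow_succ] <;>
      · push_cast
        ring_nf
        rw [Real.cos_add, Real.sin_add]
        ring
  have main : ∀ k : ℕ, c ⬝ᵥ (A ^ k).mulVec x
      = l * (α * ρ ^ k * (Real.cos (φ + k * θ) + Real.sin (φ + k * θ)) + 1) := by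
    intro k
    rw [key k, hc]
    simp [dotProduct, Fin.sum_univ_three]
    ring
  refine ⟨main, fun hl hρ hρ1 hα k => ?_⟩
  rw [main k, hα]
  have h1 : Real.cos (φ + k * θ) ^ 2 + Real.sin (φ + k * θ) ^ 2 = 1 :=
    Real.cos_sq_add_sin_sq _
  have h2 : (0:ℝ) ≤ ρ ^ k := pow_nonneg hρ k
  have h3 : ρ ^ k ≤ 1 := pow_le_one₀ hρ hρ1
  have h4 : 2 + (Real.cos (φ + k * θ) + Real.sin (φ + k * θ)) ≥ 0 := by nlinarith [sq_nonneg (Real.cos (φ + k * θ) + Real.sin (φ + k * θ) + 2)]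
  have h5 : 0 ≤ 1 / 2 * ρ ^ k * (Real.cos (φ + k * θ) + Real.sin (φ + k * θ)) + 1 := by
    nlinarith
  positivity
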